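/- arXiv:2103.06707 — 4 statements merged into one kernel-verified Lean document; each statement's English description precedes it below -/
import Mathlib

section
/- Let G be a graph with a distinct token on each vertex, and let σ be a swap sequence taking an initial token placement to a final token placement. If some pair of tokens swap with each other more than once during σ, then there exists a swap sequence of length |σ|−2 taking the same initial placement to the same final placement. -/
/-!
STATEMENT 0: Let G be a graph with a distinct token on each vertex, and let σ be a
swap sequence taking an initial token placement to a final token placement.  If some
pair of tokens swap with each other more than once during σ, then there exists a swap
sequence of length |σ|−2 taking the same initial placement to the same final placement.

Tokens form an arbitrary type `T`; a placement is a bijection `T ≃ V` (a distinct token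
on each vertex).  A swap on an edge `(u,v)` exchanges the tokens at `u` and `v`, i.e.
post-composes the placement with `Equiv.swap u v`.
-/

namespace Stmt0

/-- Apply a sequence of swaps (given by the pairs of endpoints) to a placement. -/
def applySeq {T V : Type*} [DecidableEq V] (σ : List (V × V)) (p : T ≃ V) : T ≃ V :=
  σ.foldl (fun q e => q.trans (Equiv.swap e.1 e.2)) p

/-- The placement after the first `i` swaps of `σ`. -/
def placeAfter {T V : Type*} [DecidableEq V] (σ : List (V × V)) (p : T ≃ V) (i : ℕ) : T ≃ V :=
  applySeq (σ.take i) p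

/-- The (unordered) pair of tokens exchanged by the `i`-th swap of `σ`. -/
def swappedPair {T V : Type*} [DecidableEq V] (σ : List (V × V)) (p : T ≃ V)
    (i : Fin σ.length) : Sym2 T :=
  s((placeAfter σ p i).symm (σ.get i).1, (placeAfter σ p i).symm (σ.get i).2)

/-! A swap on an edge `e` from a placement `p` is the same as first transposing the two tokens
sitting on `e` (`tokenSwap p e`) and then placing by `p`, and such a relabelling of tokens
commutes with all later swaps.  So if the `i`-th and `j`-th swaps exchange the same tokens
`a, b`, the placement before swap `j` is `swap a b` followed by the placement reached without
swap `i`, and swap `j` composes `swap a b` onto it once more: the two transpositions cancel,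
and deleting both swaps leaves the final placement unchanged. -/

theorem _root_.Equiv.swap_eq_swap_of_sym2_eq {α : Type*} [DecidableEq α] {a b c d : α}
    (h : s(a, b) = s(c, d)) : Equiv.swap a b = Equiv.swap c d := by
  rcases Sym2.eq_iff.mp h with ⟨rfl, rfl⟩ | ⟨rfl, rfl⟩
  · rfl
  · exact Equiv.swap_comm _ _

section Swaps

variable {T T' V : Type*} [DecidableEq V]

theorem applySeq_cons (e : V × V) (σ : List (V × V)) (p : T ≃ V) :
    applySeq (e :: σ) p = applySeq σ (p.trans (Equiv.swap e.1 e.2)) := rfl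

theorem applySeq_append (σ τ : List (V × V)) (p : T ≃ V) :
    applySeq (σ ++ τ) p = applySeq τ (applySeq σ p) :=
  List.foldl_append ..

theorem applySeq_trans (σ : List (V × V)) (a : T' ≃ T) (p : T ≃ V) :
    applySeq σ (a.trans p) = a.trans (applySeq σ p) := by
  induction σ generalizing p with
  | nil => rfl
  | cons e σ ih => simp only [applySeq_cons, Equiv.trans_assoc, ih]

variable [DecidableEq T]

def tokenSwap (p : T ≃ V) (e : V × V) : Equiv.Perm T :=
  Equiv.swap (p.symm e.1) (p.symm e.2)

theorem trans_swap_eq_tokenSwap_trans (p : T ≃ V) (e : V × V) :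
    p.trans (Equiv.swap e.1 e.2) = (tokenSwap p e).trans p := by
  rw [tokenSwap, ← Equiv.trans_swap_trans_symm, Equiv.trans_assoc, Equiv.symm_trans_self,
    Equiv.trans_refl]

theorem tokenSwap_eq_of_swappedPair_eq (σ : List (V × V)) (p : T ≃ V) {i j : Fin σ.length}
    (h : swappedPair σ p i = swappedPair σ p j) :
    tokenSwap (placeAfter σ p i) (σ.get i) = tokenSwap (placeAfter σ p j) (σ.get j) :=
  Equiv.swap_eq_swap_of_sym2_eq h

theorem applySeq_cons_append_cons_of_tokenSwap_eq (q : T ≃ V) (e e' : V × V)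
    (M C : List (V × V)) (h : tokenSwap (applySeq (e :: M) q) e' = tokenSwap q e) :
    applySeq (e :: (M ++ e' :: C)) q = applySeq (M ++ C) q := by
  have before_e' : applySeq (e :: M) q = (tokenSwap q e).trans (applySeq M q) := by
    rw [applySeq_cons, trans_swap_eq_tokenSwap_trans, applySeq_trans]
  rw [← List.cons_append, applySeq_append, applySeq_cons, trans_swap_eq_tokenSwap_trans, h,
    before_e', ← Equiv.trans_assoc, tokenSwap, Equiv.swap_swap, Equiv.refl_trans, applySeq_append]

end Swaps

theorem _root_.List.take_eq_take_append_getElem_cons {α : Type*} (l : List α) {i j : ℕ}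
    (hij : i < j) (hj : j < l.length) : l.take j = l.take i ++ l[i] :: (l.take j).drop (i + 1) := by
  have hi : i < (l.take j).length := by rw [List.length_take]; omega
  conv_lhs => rw [← List.take_append_drop i (l.take j), List.drop_eq_getElem_cons hi]
  rw [List.take_take, Nat.min_eq_left hij.le, List.getElem_take]

theorem _root_.List.eq_take_append_getElem_cons_drop {α : Type*} (l : List α) {j : ℕ}
    (hj : j < l.length) : l = l.take j ++ l[j] :: l.drop (j + 1) := by
  rw [← List.drop_eq_getElem_cons hj, List.take_append_drop]

theorem no_repeated_swap_in_shortest {T V : Type*} [DecidableEq V] (G : SimpleGraph V)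
    (σ : List (V × V)) (hσ : ∀ e ∈ σ, G.Adj e.1 e.2)
    (p₀ : T ≃ V)
    (i j : Fin σ.length) (hij : i < j)
    (hpair : swappedPair σ p₀ i = swappedPair σ p₀ j) :
    ∃ σ' : List (V × V), (∀ e ∈ σ', G.Adj e.1 e.2) ∧ σ'.length = σ.length - 2 ∧
      applySeq σ' p₀ = applySeq σ p₀ := by
  classical
  rcases i with ⟨i, hi⟩
  rcases j with ⟨j, hj⟩
  set A := σ.take i
  set M := (σ.take j).drop (i + 1)
  set C := σ.drop (j + 1)
  have htake : σ.take j = A ++ σ[i] :: M := σ.take_eq_take_append_getElem_cons hij hj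
  have hσ_eq : σ = A ++ σ[i] :: (M ++ σ[j] :: C) := by
    rw [← List.cons_append, ← List.append_assoc, ← htake]
    exact σ.eq_take_append_getElem_cons_drop hj
  refine ⟨A ++ (M ++ C), fun e he => hσ e ?_, ?_, ?_⟩
  · rw [hσ_eq]
    simp only [List.mem_append, List.mem_cons] at he ⊢
    tauto
  · rw [hσ_eq]
    simp only [List.length_append, List.length_cons]
    omega
  · have hswap := tokenSwap_eq_of_swappedPair_eq σ p₀ hpair
    simp only [placeAfter, htake, applySeq_append, List.get_eq_getElem] at hswap
    rw [hσ_eq, applySeq_append A, applySeq_append A,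
      applySeq_cons_append_cons_of_tokenSwap_eq _ _ _ _ _ hswap.symm]

end Stmt0
end

section
/- Given an STS instance consisting of a graph on vertices 1,…,m, a target permutation π of tokens 1,…,m, and a sequence of swaps (a_1,b_1),…,(a_n,b_n) where each (a_i,b_i) is an edge of the graph, construct a Star STS instance as follows: the star has a center vertex holding token 0 and leaves {1,…,m} ∪ {s_i^in, s_i^out : 1≤i≤n}, each leaf initially holding a token of its own label; the target permutation keeps token 0 at the center, sends token i (1≤i≤m) to leaf π(i), and exchanges tokens s_i^in and s_i^out for each i; the swap sequence is the concatenation, over i=1,…,n in order, of the six swaps on edges (0,s_i^in),(0,a_i),(0,b_i),(0,a_i),(0,s_i^out),(0,s_i^in). Then the STS instance is a YES instance if and only if the constructed Star STS instance is a YES instance. -/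
/-!
STATEMENT 1: The reduction from Subsequence Token Swapping Reachability (STS) on a
graph on vertices `1,…,m` to Star STS.

STS: graph `G` on `Fin m`, vertex `i` initially holds token `i`; target permutation
`π`; swaps are a list of edges; YES iff some subsequence of the swaps realizes `π`
(token `i` ends on vertex `π i`).

Star STS (with leaf set `L`): star with center (represented by `none`) and leaves
(`some l` for `l : L`); token `o : Option L` starts at vertex `o`; a swap `l : L`
exchanges the tokens at the center and at leaf `l`; YES iff some subsequence of the
swap list realizes the target permutation.

Construction: leaves are `{1,…,m} ∪ {sᵢⁱⁿ, sᵢᵒᵘᵗ : 1 ≤ i ≤ n}`, i.e.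
`L = Fin m ⊕ Fin n ⊕ Fin n`; the target permutation keeps token `0` at the center,
sends token `i` to leaf `π i` and exchanges `sᵢⁱⁿ` with `sᵢᵒᵘᵗ`; the swap sequence is
the concatenation over `i` of the six swaps `sᵢⁱⁿ, aᵢ, bᵢ, aᵢ, sᵢᵒᵘᵗ, sᵢⁱⁿ`.
-/

namespace Stmt1

/-- swap the values `e.1`, `e.2`. -/
def swapV {V : Type*} [DecidableEq V] (e : V × V) (v : V) : V :=
  if v = e.1 then e.2 else if v = e.2 then e.1 else v

/-- Apply a sequence of swaps to a token placement (token ↦ vertex). -/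
def applySwaps {T V : Type*} [DecidableEq V] (σ : List (V × V)) (f : T → V) : T → V :=
  σ.foldl (fun g e => fun t => swapV e (g t)) f

/-- Apply a sequence of star swaps (each given by a leaf) to a placement on the star
with center `none` and leaves `some l`. -/
def starApply {L : Type*} [DecidableEq L] (σ : List L) (f : Option L → Option L) :
    Option L → Option L :=
  σ.foldl (fun g l => fun t => swapV ((none : Option L), some l) (g t)) f

/-- The Star STS instance with target permutation `π` and allowed swap sequence `σ`
is a YES instance. -/
def StarSTSYes {L : Type*} [DecidableEq L] (π : Equiv.Perm (Option L)) (σ : List L) : Prop :=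
  ∃ σ' : List L, σ'.Sublist σ ∧ starApply σ' id = ⇑π

/-- The leaf type of the constructed star: leaves `1,…,m`, then the `sᵢⁱⁿ`, then the
`sᵢᵒᵘᵗ`. -/
abbrev L (m n : ℕ) := Fin m ⊕ Fin n ⊕ Fin n

/-- Target permutation of the constructed Star STS instance: the center token stays,
token `i` goes to leaf `π i`, and `sᵢⁱⁿ`, `sᵢᵒᵘᵗ` are exchanged. -/
def starTarget {m n : ℕ} (π : Equiv.Perm (Fin m)) : Equiv.Perm (Option (L m n)) :=
  Equiv.optionCongr (Equiv.sumCongr π (Equiv.sumComm (Fin n) (Fin n)))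

/-- The swap sequence of the constructed Star STS instance. -/
def starSeq {m n : ℕ} (sw : Fin n → Fin m × Fin m) : List (L m n) :=
  (List.ofFn fun i : Fin n =>
    ([Sum.inr (Sum.inl i), Sum.inl (sw i).1, Sum.inl (sw i).2, Sum.inl (sw i).1,
      Sum.inr (Sum.inr i), Sum.inr (Sum.inl i)] : List (L m n))).flatten

/-!
Token placements are permutations: a swap sequence acts as the product of its transpositions,
and a star swap on leaf `l` is the transposition of the center `none` with `some l`. The six
swaps of gadget `i` compose to `(sᵢⁱⁿ sᵢᵒᵘᵗ)(aᵢ bᵢ)`, and their subsequence `sᵢⁱⁿ, sᵢᵒᵘᵗ, sᵢⁱⁿ` to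
`(sᵢⁱⁿ sᵢᵒᵘᵗ)`, so each subsequence of the STS swaps yields a Star STS solution. Conversely, only
gadget `i` touches the leaves `sᵢⁱⁿ, sᵢᵒᵘᵗ`, so in a Star STS solution the part taken from gadget
`i` must itself exchange the tokens `sᵢⁱⁿ, sᵢᵒᵘᵗ`; among the 64 subsequences of the gadget only
those acting as `(sᵢⁱⁿ sᵢᵒᵘᵗ)` or `(sᵢⁱⁿ sᵢᵒᵘᵗ)(aᵢ bᵢ)` do that, so each gadget either skips or
performs the swap `(aᵢ, bᵢ)`.
-/

open Equiv

section Swaps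

variable {V : Type*} [DecidableEq V]

theorem swapV_eq_swap (e : V × V) (v : V) : swapV e v = swap e.1 e.2 v :=
  (swap_apply_def _ _ _).symm

def swapsPerm : List (V × V) → Perm V
  | [] => 1
  | e :: σ => swapsPerm σ * swap e.1 e.2

@[simp] theorem swapsPerm_nil : swapsPerm ([] : List (V × V)) = 1 := rfl

@[simp] theorem swapsPerm_cons (e : V × V) (σ : List (V × V)) :
    swapsPerm (e :: σ) = swapsPerm σ * swap e.1 e.2 := rfl

theorem swapsPerm_append (σ₁ σ₂ : List (V × V)) :
    swapsPerm (σ₁ ++ σ₂) = swapsPerm σ₂ * swapsPerm σ₁ := by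
  induction σ₁ with
  | nil => simp
  | cons e σ₁ ih => simp [ih, mul_assoc]

theorem applySwaps_eq_comp {T : Type*} (σ : List (V × V)) (f : T → V) :
    applySwaps σ f = swapsPerm σ ∘ f := by
  induction σ generalizing f with
  | nil => rfl
  | cons e σ ih =>
    change applySwaps σ (swapV e ∘ f) = _
    rw [ih]
    funext t
    simp [swapV_eq_swap]

end Swaps

section Star

variable {α : Type*} [DecidableEq α]

def starPerm (σ : List α) : Perm (Option α) :=
  swapsPerm (σ.map fun l => (none, some l))

theorem starApply_eq_comp (σ : List α) (f : Option α → Option α) :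
    starApply σ f = starPerm σ ∘ f := by
  rw [starPerm, ← applySwaps_eq_comp, applySwaps, starApply, List.foldl_map]

@[simp] theorem starPerm_nil : starPerm ([] : List α) = 1 := rfl

@[simp] theorem starPerm_cons (l : α) (σ : List α) :
    starPerm (l :: σ) = starPerm σ * swap none (some l) := rfl

theorem starPerm_append (σ₁ σ₂ : List α) :
    starPerm (σ₁ ++ σ₂) = starPerm σ₂ * starPerm σ₁ := by
  rw [starPerm, List.map_append, swapsPerm_append]; rfl

theorem starPerm_apply_some_of_notMem {σ : List α} {l : α} (h : l ∉ σ) :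
    starPerm σ (some l) = some l := by
  induction σ with
  | nil => rfl
  | cons x σ ih =>
    rw [List.mem_cons, not_or] at h
    rw [starPerm_cons, Perm.mul_apply, swap_apply_of_ne_of_ne (by simp) (by simpa using h.1),
      ih h.2]

theorem starPerm_apply_of_append {σ₁ σ₂ : List α} {u v : Option α}
    (h : starPerm (σ₁ ++ σ₂) u = v) (hv : starPerm σ₂ v = v) : starPerm σ₁ u = v :=
  (starPerm σ₂).injective (by rw [hv, ← h, starPerm_append, Perm.mul_apply])

theorem starPerm_triple {x y : α} (hxy : x ≠ y) :
    starPerm [x, y, x] = swap (some x) (some y) := by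
  rw [← swap_mul_swap_mul_swap (y := none) (by simp) (by simpa using hxy.symm),
    swap_comm (some y)]
  simp [mul_assoc]

theorem starPerm_gadget {x y a b : α} (hxy : x ≠ y) (hab : a ≠ b) (hxa : x ≠ a)
    (hxb : x ≠ b) :
    starPerm [x, a, b, a, y, x] = swap (some x) (some y) * swap (some a) (some b) := by
  have hcomm : swap (some a) (some b) * swap none (some x) =
      swap none (some x) * swap (some a) (some b) := by
    rw [mul_swap_eq_swap_mul, swap_apply_of_ne_of_ne (by simp) (by simp),
      swap_apply_of_ne_of_ne (by simpa using hxa) (by simpa using hxb)]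
  have hM : swap none (some a) * swap none (some b) * swap none (some a) =
      swap (some a) (some b) := by
    rw [← swap_mul_swap_mul_swap (x := some b) (y := none) (z := some a) (by simp)
      (by simpa using hab.symm), swap_comm (some b)]
  calc starPerm [x, a, b, a, y, x]
      = swap none (some x) * swap none (some y) *
          (swap none (some a) * swap none (some b) * swap none (some a)) *
          swap none (some x) := by
        simp [mul_assoc]
    _ = starPerm [x, y, x] * swap (some a) (some b) := by
        rw [hM, mul_assoc _ (swap (some a) (some b)), hcomm]
        simp [mul_assoc]
    _ = swap (some x) (some y) * swap (some a) (some b) := by rw [starPerm_triple hxy]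

theorem starPerm_eq_of_sublist_gadget {x y a b : α} (hxy : x ≠ y) (hab : a ≠ b) (hxa : x ≠ a)
    (hxb : x ≠ b) (hya : y ≠ a) (hyb : y ≠ b) {τ : List α} (hτ : τ.Sublist [x, a, b, a, y, x])
    (hx : starPerm τ (some x) = some y) (hy : starPerm τ (some y) = some x) :
    starPerm τ = swap (some x) (some y) ∨
      starPerm τ = swap (some x) (some y) * swap (some a) (some b) := by
  have hxx : starPerm [x, a, a, y, x] = swap (some x) (some y) := by
    rw [← starPerm_triple hxy]; simp [mul_assoc]
  rcases List.sublist_cons_iff.1 hτ with g1 | ⟨t1, rfl, g1⟩ <;>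
  rcases List.sublist_cons_iff.1 g1 with g2 | ⟨t2, rfl, g2⟩ <;>
  rcases List.sublist_cons_iff.1 g2 with g3 | ⟨t3, rfl, g3⟩ <;>
  rcases List.sublist_cons_iff.1 g3 with g4 | ⟨t4, rfl, g4⟩ <;>
  rcases List.sublist_cons_iff.1 g4 with g5 | ⟨t5, rfl, g5⟩ <;>
  rcases List.sublist_cons_iff.1 g5 with g6 | ⟨t6, rfl, g6⟩ <;>
  rw [List.sublist_nil] at g6 <;> subst g6 <;>
  -- only `[x, y, x]`, `[x, a, a, y, x]` and the whole gadget exchange `x` and `y`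
  first
    | (left; rw [starPerm_triple hxy])
    | (left; rw [hxx])
    | (right; rw [starPerm_gadget hxy hab hxa hxb])
    | (exfalso
       simp [swap_apply_def, hxy, hab, hxa, hxb, hya, hyb, hxy.symm, hab.symm, hxa.symm,
         hxb.symm, hya.symm, hyb.symm] at hx hy)

end Star

section Exchange

variable {ι : Type*} [DecidableEq ι]

def exchangeOn (s : Finset ι) : Perm (ι ⊕ ι) :=
  Function.Involutive.toPerm
    (Sum.elim (fun i => if i ∈ s then .inr i else .inl i)
      (fun i => if i ∈ s then .inl i else .inr i))
    (by rintro (i | i) <;> by_cases hi : i ∈ s <;> simp [hi])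

@[simp] theorem exchangeOn_inl (s : Finset ι) (i : ι) :
    exchangeOn s (.inl i) = if i ∈ s then .inr i else .inl i := rfl

@[simp] theorem exchangeOn_inr (s : Finset ι) (i : ι) :
    exchangeOn s (.inr i) = if i ∈ s then .inl i else .inr i := rfl

@[simp] theorem exchangeOn_empty : exchangeOn (∅ : Finset ι) = 1 := by
  ext (i | i) <;> simp

theorem exchangeOn_insert {s : Finset ι} {i : ι} (hi : i ∉ s) :
    exchangeOn (insert i s) = exchangeOn s * swap (.inl i) (.inr i) := by
  ext (j | j) <;> by_cases hj : j = i <;> simp [swap_apply_of_ne_of_ne, hj, hi]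

theorem exchangeOn_univ [Fintype ι] :
    exchangeOn (Finset.univ : Finset ι) = sumComm ι ι := by
  ext (i | i) <;> simp

end Exchange

theorem optionCongr_mul {α : Type*} (p q : Perm α) :
    optionCongr (p * q) = optionCongr p * optionCongr q :=
  optionCongr_trans q p

theorem optionCongr_sumCongr_mul {α β : Type*} (p p' : Perm α) (q q' : Perm β) :
    optionCongr (sumCongr p q) * optionCongr (sumCongr p' q') =
      optionCongr (sumCongr (p * p') (q * q')) := by
  rw [← optionCongr_mul, Perm.sumCongr_mul]

theorem optionCongr_sumCongr_exchangeOn_mul {α ι : Type*} [DecidableEq ι] {s : Finset ι}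
    {i : ι} (hi : i ∉ s) (p q : Perm α) :
    optionCongr (sumCongr p (exchangeOn s)) * optionCongr (sumCongr q (swap (.inl i) (.inr i))) =
      optionCongr (sumCongr (p * q) (exchangeOn (insert i s))) := by
  rw [optionCongr_sumCongr_mul, exchangeOn_insert hi]

section Reduction

variable {m n : ℕ} (sw : Fin n → Fin m × Fin m)

def sIn (i : Fin n) : L m n := .inr (.inl i)

def sOut (i : Fin n) : L m n := .inr (.inr i)

def block (i : Fin n) : List (L m n) :=
  [sIn i, .inl (sw i).1, .inl (sw i).2, .inl (sw i).1, sOut i, sIn i]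

theorem starSeq_eq_flatMap : starSeq sw = (List.finRange n).flatMap (block sw) := by
  rw [starSeq, List.ofFn_eq_map, List.flatMap_def]; rfl

theorem sIn_mem_block {i j : Fin n} : sIn j ∈ block sw i ↔ j = i := by
  simp [block, sIn, sOut]

theorem sOut_mem_block {i j : Fin n} : sOut j ∈ block sw i ↔ j = i := by
  simp [block, sIn, sOut]

theorem idle_sublist_block (i : Fin n) : [sIn i, sOut i, sIn i].Sublist (block sw i) :=
  .cons_cons _ <| List.sublist_append_right
    ([.inl (sw i).1, .inl (sw i).2, .inl (sw i).1] : List (L m n)) _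

theorem swap_sIn_sOut (i : Fin n) :
    swap (some (sIn i)) (some (sOut i)) =
      optionCongr (sumCongr (1 : Perm (Fin m)) (swap (.inl i) (.inr i))) := by
  simp [sIn, sOut]

theorem swap_sIn_sOut_mul_swap (i : Fin n) (a b : Fin m) :
    swap (some (sIn i)) (some (sOut i)) * swap (some (.inl a)) (some (.inl b)) =
      optionCongr (sumCongr (swap a b) (swap (.inl i) (.inr i))) := by
  rw [swap_sIn_sOut, ← optionCongr_swap, ← Perm.sumCongr_swap_one, optionCongr_sumCongr_mul,
    one_mul, mul_one]

theorem starPerm_idle (i : Fin n) :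
    starPerm [sIn i, sOut i, sIn i] =
      optionCongr (sumCongr (1 : Perm (Fin m)) (swap (.inl i) (.inr i))) := by
  rw [starPerm_triple (by simp [sIn, sOut]), swap_sIn_sOut]

theorem starPerm_block {i : Fin n} (hi : (sw i).1 ≠ (sw i).2) :
    starPerm (block sw i) =
      optionCongr (sumCongr (swap (sw i).1 (sw i).2) (swap (.inl i) (.inr i))) := by
  rw [block, starPerm_gadget (by simp [sIn, sOut]) (by simpa using hi) (by simp [sIn])
    (by simp [sIn]), swap_sIn_sOut_mul_swap]

theorem exists_sublist_of_starPerm_block {i : Fin n} (hi : (sw i).1 ≠ (sw i).2)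
    {τ : List (L m n)} (hτ : τ.Sublist (block sw i))
    (hIn : starPerm τ (some (sIn i)) = some (sOut i))
    (hOut : starPerm τ (some (sOut i)) = some (sIn i)) :
    ∃ js : List (Fin n), js.Sublist [i] ∧
      starPerm τ = optionCongr (sumCongr (swapsPerm (js.map sw)) (swap (.inl i) (.inr i))) := by
  rcases starPerm_eq_of_sublist_gadget (by simp [sIn, sOut]) (by simpa using hi) (by simp [sIn])
    (by simp [sIn]) (by simp [sOut]) (by simp [sOut]) hτ hIn hOut with h | h
  · exact ⟨[], List.nil_sublist _, by rw [h, swap_sIn_sOut]; rfl⟩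
  · exact ⟨[i], .refl _, by rw [h, swap_sIn_sOut_mul_swap]; simp⟩

theorem exists_sublist_starPerm_eq (hne : ∀ i, (sw i).1 ≠ (sw i).2) {js ks : List (Fin n)}
    (hjs : js.Sublist ks) (hks : ks.Nodup) :
    ∃ τ : List (L m n), τ.Sublist (ks.flatMap (block sw)) ∧
      starPerm τ = optionCongr (sumCongr (swapsPerm (js.map sw)) (exchangeOn ks.toFinset)) := by
  induction hjs with
  | slnil => exact ⟨[], .slnil, by simp⟩
  | cons i _ ih =>
    rw [List.nodup_cons] at hks
    obtain ⟨τ, hτ, hP⟩ := ih hks.2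
    refine ⟨[sIn i, sOut i, sIn i] ++ τ, (idle_sublist_block sw i).append hτ, ?_⟩
    rw [starPerm_append, hP, starPerm_idle, List.toFinset_cons,
      optionCongr_sumCongr_exchangeOn_mul (by simpa using hks.1), mul_one]
  | cons_cons i _ ih =>
    rw [List.nodup_cons] at hks
    obtain ⟨τ, hτ, hP⟩ := ih hks.2
    refine ⟨block sw i ++ τ, (List.Sublist.refl _).append hτ, ?_⟩
    rw [starPerm_append, hP, starPerm_block sw (hne i), List.toFinset_cons,
      optionCongr_sumCongr_exchangeOn_mul (by simpa using hks.1)]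
    rfl

theorem exists_sublist_of_starPerm (hne : ∀ i, (sw i).1 ≠ (sw i).2) {ks : List (Fin n)}
    (hks : ks.Nodup) {τ : List (L m n)} (hτ : τ.Sublist (ks.flatMap (block sw)))
    (hex : ∀ i ∈ ks, starPerm τ (some (sIn i)) = some (sOut i) ∧
      starPerm τ (some (sOut i)) = some (sIn i)) :
    ∃ js : List (Fin n), js.Sublist ks ∧
      starPerm τ = optionCongr (sumCongr (swapsPerm (js.map sw)) (exchangeOn ks.toFinset)) := by
  induction ks generalizing τ with
  | nil =>
    rw [List.flatMap_nil, List.sublist_nil] at hτ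
    exact ⟨[], .slnil, by simp [hτ]⟩
  | cons i ks ih =>
    rw [List.nodup_cons] at hks
    rw [List.flatMap_cons] at hτ
    obtain ⟨τ₁, τ₂, rfl, hτ₁, hτ₂⟩ := List.sublist_append_iff.1 hτ
    have hfix₂ : starPerm τ₂ (some (sIn i)) = some (sIn i) ∧
        starPerm τ₂ (some (sOut i)) = some (sOut i) := by
      constructor <;> refine starPerm_apply_some_of_notMem fun h => hks.1 ?_ <;>
        simpa [sIn_mem_block, sOut_mem_block] using hτ₂.subset h
    have hfix₁ : ∀ j ∈ ks, starPerm τ₁ (some (sIn j)) = some (sIn j) ∧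
        starPerm τ₁ (some (sOut j)) = some (sOut j) := by
      intro j hj
      have hji : j ≠ i := by rintro rfl; exact hks.1 hj
      exact ⟨starPerm_apply_some_of_notMem fun h => hji ((sIn_mem_block sw).1 (hτ₁.subset h)),
        starPerm_apply_some_of_notMem fun h => hji ((sOut_mem_block sw).1 (hτ₁.subset h))⟩
    obtain ⟨js₁, hjs₁, hP₁⟩ := exists_sublist_of_starPerm_block sw (hne i) hτ₁
      (starPerm_apply_of_append (hex i List.mem_cons_self).1 hfix₂.2)
      (starPerm_apply_of_append (hex i List.mem_cons_self).2 hfix₂.1)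
    obtain ⟨js₂, hjs₂, hP₂⟩ := ih hks.2 hτ₂ fun j hj => by
      simpa [starPerm_append, (hfix₁ j hj).1, (hfix₁ j hj).2] using
        hex j (List.mem_cons_of_mem _ hj)
    refine ⟨js₁ ++ js₂, hjs₁.append hjs₂, ?_⟩
    rw [starPerm_append, hP₂, hP₁, List.toFinset_cons,
      optionCongr_sumCongr_exchangeOn_mul (by simpa using hks.1), List.map_append, swapsPerm_append]

end Reduction

theorem sts_iff_starSTS {m n : ℕ} (G : SimpleGraph (Fin m)) (π : Equiv.Perm (Fin m))
    (sw : Fin n → Fin m × Fin m) (hsw : ∀ i, G.Adj (sw i).1 (sw i).2) :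
    (∃ σ' : List (Fin m × Fin m), σ'.Sublist (List.ofFn sw) ∧
        applySwaps σ' (id : Fin m → Fin m) = ⇑π) ↔
      StarSTSYes (starTarget (n := n) π) (starSeq sw) := by
  have hne : ∀ i, (sw i).1 ≠ (sw i).2 := fun i => (hsw i).ne
  have htarget : starTarget (n := n) π =
      optionCongr (sumCongr π (exchangeOn (List.finRange n).toFinset)) := by
    rw [List.toFinset_finRange, exchangeOn_univ]; rfl
  simp only [StarSTSYes, applySwaps_eq_comp, starApply_eq_comp, Function.comp_id,
    DFunLike.coe_fn_eq, List.ofFn_eq_map, List.sublist_map_iff, starSeq_eq_flatMap, htarget]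
  constructor
  · rintro ⟨_, ⟨js, hjs, rfl⟩, rfl⟩
    exact exists_sublist_starPerm_eq sw hne hjs (List.nodup_finRange n)
  · rintro ⟨τ, hτ, hP⟩
    obtain ⟨js, hjs, hP'⟩ := exists_sublist_of_starPerm sw hne (List.nodup_finRange n) hτ
      fun i _ => by simp [hP, sIn, sOut]
    refine ⟨_, ⟨js, hjs, rfl⟩, ?_⟩
    exact Equiv.ext fun t => by
      simpa using DFunLike.congr_fun (hP'.symm.trans hP) (some (.inl t))

end Stmt1
end

section
/- In the scaffold solution of the constructed parallel token swapping instance, no two swaps scheduled in the same round share a vertex; that is, in every round the set of swapped edges forms a matching. -/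
namespace ParallelTS

/-!
Construction (parallel): given a Star STS instance with slots `1,…,m` (encoded as
`Fin m`), items `0,…,m` (encoded as `Option (Fin m)`, `none` = item 0), target
permutation `π` and swap sequence `s₁,…,sₙ` (`s : Fin n → Fin m`), set `K = 8n` and
build a subdivided star with root `r` and branches: swap branches `w¹,…,wⁿ`, slot
branches `s¹,…,s^{m+n}` and garbage branches `g`, `g′`, each a path of `K` vertices.
-/

/-- The branches: swap branches `wᵗ` (`Sum.inl`), slot branches `sⁱ`
(`Sum.inr (Sum.inl _)`), and the garbage branches `g = Sum.inr (Sum.inr false)` and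
`g′ = Sum.inr (Sum.inr true)`. -/
abbrev Branch (m n : ℕ) := Fin n ⊕ Fin (m + n) ⊕ Bool

/-- Vertices of the subdivided star: `none` is the root `r`; `some (b, j)` is the
vertex `b_{j+1}` of branch `b` at distance `j+1` from the root.  (The coordinate `j`
ranges over all of `ℕ`; the graph below only has edges between the root and the first
`K` vertices of each branch, so the remaining vertices are isolated and carry no
tokens.) -/
abbrev PV (m n : ℕ) := Option (Branch m n × ℕ)

/-- Adjacency generator for the subdivided star with branches of length `K = 8n`. -/
def prel {m n : ℕ} : PV m n → PV m n → Prop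
  | none, some (_, j) => j = 0 ∧ 0 < 8 * n
  | some (b, j), some (b', j') => b = b' ∧ j' = j + 1 ∧ j' < 8 * n
  | _, _ => False

/-- The subdivided star, as a simple graph. -/
def PGraph (m n : ℕ) : SimpleGraph (PV m n) := SimpleGraph.fromRel prel

/-- Swap the two values `e.1`, `e.2`. -/
def swapV {V : Type*} [DecidableEq V] (e : V × V) (v : V) : V :=
  if v = e.1 then e.2 else if v = e.2 then e.1 else v

/-- Trajectory of the vertex `v` under a schedule of rounds, each round being a list
of (disjoint) swaps. -/
def applySched {V : Type*} [DecidableEq V] (sched : List (List (V × V))) (v : V) : V :=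
  sched.foldl (fun v R => R.foldl (fun v e => swapV e v) v) v

/-- Two swaps do not share a vertex. -/
def NoShare {V : Type*} (e f : V × V) : Prop :=
  e.1 ≠ f.1 ∧ e.1 ≠ f.2 ∧ e.2 ≠ f.1 ∧ e.2 ≠ f.2

/-- Apply a sequence of star swaps (each given by a leaf) to a placement on the star
with center `none` and leaves `some l`. -/
def starApply {L : Type*} [DecidableEq L] (σ : List L) (f : Option L → Option L) :
    Option L → Option L :=
  σ.foldl (fun g l => fun t => swapV ((none : Option L), some l) (g t)) f

/-- The Star STS instance is a YES instance. -/
def StarSTSYes {L : Type*} [DecidableEq L] (π : Equiv.Perm (Option L)) (σ : List L) : Prop :=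
  ∃ σ' : List L, σ'.Sublist σ ∧ starApply σ' id = ⇑π

variable {m n : ℕ}

/-- `a(i,t)`: the index of the slot branch representing slot `i` after `t` steps:
`a(i,0) = i`, and `a(i,t) = a(i,t-1)` for `i ≠ s_t` while `a(s_t,t) = m + t`
(`1`-indexed; below everything is `0`-indexed). -/
def aFun (s : Fin n → Fin m) : ℕ → Fin m → Fin (m + n)
  | 0, i => ⟨i.val, Nat.lt_of_lt_of_le i.isLt (Nat.le_add_right m n)⟩
  | t + 1, i =>
      if h : t < n then
        (if s ⟨t, h⟩ = i then ⟨m + t, Nat.add_lt_add_left h m⟩ else aFun s t i)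
      else aFun s t i

/-- The enforcement tokens are indexed by `(t, r) : Fin n × Fin 4`; the token
`e_{(t,r)}` is `e_d` for the odd number `d = 8t + 2r + 1`. -/
def dOf (t : Fin n) (r : Fin 4) : ℕ := 8 * t.val + 2 * r.val + 1

/-- The starting branch `x^d` of enforcement token `e_d`, `d = 8t+2r+1`:
`x^{8T-7} = x^{8T-5} = w^T`, `x^{8T-3} = g′`, `x^{8T-1} = s^{m+T}` (where
`T = t+1`). -/
def xB (s : Fin n → Fin m) (t : Fin n) (r : Fin 4) : Branch m n :=
  if r.val ≤ 1 then Sum.inl t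
  else if r.val = 2 then Sum.inr (Sum.inr true)
  else Sum.inr (Sum.inl ⟨m + t.val, Nat.add_lt_add_left t.isLt m⟩)

/-- The destination branch `y^d` of enforcement token `e_d`, `d = 8t+2r+1`:
`y^{8T-7} = s^{a(s_T, T-1)}`, `y^{8T-5} = g`, `y^{8T-3} = y^{8T-1} = w^T` (where
`T = t+1`). -/
def yB (s : Fin n → Fin m) (t : Fin n) (r : Fin 4) : Branch m n :=
  if r.val = 0 then Sum.inr (Sum.inl (aFun s t.val (s t)))
  else if r.val = 1 then Sum.inr (Sum.inr false)
  else Sum.inl t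

/-- Initial vertex of item token `o`: the root for item `0`, the vertex `sⁱ₁` for
item `i`. -/
def itemInit (s : Fin n → Fin m) : Option (Fin m) → PV m n
  | none => none
  | some i => some (Sum.inr (Sum.inl (aFun s 0 i)), 0)

/-- Initial vertex of the enforcement token `e_d`, namely `x^d_d`. -/
def enfInit (s : Fin n → Fin m) (t : Fin n) (r : Fin 4) : PV m n :=
  some (xB s t r, dOf t r - 1)

/-- A vertex initially occupied by an item or enforcement token. -/
def Occupied (s : Fin n → Fin m) (v : PV m n) : Prop :=
  (∃ o : Option (Fin m), itemInit s o = v) ∨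
    (∃ tr : Fin n × Fin 4, enfInit s tr.1 tr.2 = v)

/-- The tokens of the parallel instance: item tokens, enforcement tokens, and one
filler token for each initially unoccupied vertex. -/
abbrev PTok (s : Fin n → Fin m) :=
  Option (Fin m) ⊕ (Fin n × Fin 4) ⊕ {v : PV m n // ¬ Occupied s v}

/-- Initial placement of all tokens. -/
def initP (s : Fin n → Fin m) : PTok s → PV m n
  | Sum.inl o => itemInit s o
  | Sum.inr (Sum.inl (t, r)) => enfInit s t r
  | Sum.inr (Sum.inr v) => v.val

/-- Position of the enforcement token with branches `xb`, `yb` and starting distance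
`d` after `τ` rounds of the scaffold solution: it moves one step toward its target in
every round, reaching the root after round `d`. -/
def posE (xb yb : Branch m n) (d τ : ℕ) : PV m n :=
  if τ < d then some (xb, d - τ - 1)
  else if τ = d then none
  else some (yb, τ - d - 1)

/-- The scaffold solution: the `K = 8n`-round schedule whose round `τ+1` swaps each
enforcement token one step along the path toward its target. -/
def scaffold (s : Fin n → Fin m) : List (List (PV m n × PV m n)) :=
  List.ofFn fun τ : Fin (8 * n) =>
    (List.ofFn fun t : Fin n =>
      List.ofFn fun r : Fin 4 =>
        (posE (xB s t r) (yB s t r) (dOf t r) τ.val,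
          posE (xB s t r) (yB s t r) (dOf t r) (τ.val + 1))).flatten

/-- Target placement of all tokens: item token `o` goes to the root if `π o = 0` and
to `s^{a(π o, n)}₁` otherwise; enforcement token `e_d` goes to `y^d_{K-d}`; each
filler token goes to the final vertex of its initial vertex under the scaffold
solution. -/
def tgtP (s : Fin n → Fin m) (π : Equiv.Perm (Option (Fin m))) : PTok s → PV m n
  | Sum.inl o =>
      (match π o with
        | none => none
        | some i => some (Sum.inr (Sum.inl (aFun s n i)), 0))
  | Sum.inr (Sum.inl (t, r)) => some (yB s t r, 8 * n - dOf t r - 1)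
  | Sum.inr (Sum.inr v) => applySched (scaffold s) v.val

/-- `sched` is a solution of the parallel token swapping instance using at most `K`
rounds: at most `K` rounds, every round is a matching of edges of the graph, and the
schedule brings every token from its initial vertex to its target vertex. -/
def IsSolution (s : Fin n → Fin m) (π : Equiv.Perm (Option (Fin m)))
    (K : ℕ) (sched : List (List (PV m n × PV m n))) : Prop :=
  sched.length ≤ K ∧
  (∀ R ∈ sched, (∀ e ∈ R, (PGraph m n).Adj e.1 e.2) ∧ R.Pairwise NoShare) ∧
  ∀ t : PTok s, applySched sched (initP s t) = tgtP s π t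

end ParallelTS

namespace ParallelTS

/-!
STATEMENT 10: In the scaffold solution of the constructed parallel token swapping
instance, no two swaps scheduled in the same round share a vertex; that is, in every
round the set of swapped edges forms a matching.
-/

lemma aFun_lt {m n : ℕ} (s : Fin n → Fin m) : ∀ (t : ℕ) (i : Fin m), (aFun s t i).val < m + t
  | 0, i => by simpa [aFun] using i.isLt
  | t + 1, i => by
      unfold aFun
      split_ifs with h h2
      · simp
      · have := aFun_lt s t i; omega
      · have := aFun_lt s t i; omega

lemma cross {m n : ℕ} (s : Fin n → Fin m) (t t' : Fin n) (r r' : Fin 4) (σ σ' : ℕ)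
    (h : σ' = σ ∨ σ' = σ + 1 ∨ σ = σ' + 1)
    (h1 : σ < dOf t r) (h2 : dOf t' r' < σ') :
    (some (xB s t r, dOf t r - σ - 1) : PV m n) ≠ some (yB s t' r', σ' - dOf t' r' - 1) := by
  intro heq
  simp only [Option.some.injEq, Prod.mk.injEq] at heq
  obtain ⟨hb, -⟩ := heq
  fin_cases r <;> fin_cases r' <;> simp [xB, yB, dOf] at hb h1 h2 <;>
    first
      | omega
      | (subst hb; omega)
      | (have ha := aFun_lt s t'.val (s t'); rw [← hb] at ha; simp at ha; omega)

lemma dval_lt {m n : ℕ} (t : Fin n) : t.val < n := t.isLt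

lemma key {m n : ℕ} (s : Fin n → Fin m) {t t' : Fin n} {r r' : Fin 4}
    (hne : (t, r) ≠ (t', r')) (σ σ' : ℕ) (h : σ' = σ ∨ σ' = σ + 1 ∨ σ = σ' + 1) :
    posE (xB s t r) (yB s t r) (dOf t r) σ ≠
      posE (xB s t' r') (yB s t' r') (dOf t' r') σ' := by
  have hv : t.val ≠ t'.val ∨ r.val ≠ r'.val := by
    by_contra hc
    push_neg at hc
    exact hne (Prod.ext (Fin.ext hc.1) (Fin.ext hc.2))
  have hr : r.val < 4 := r.isLt
  have hr' : r'.val < 4 := r'.isLt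
  unfold posE
  split_ifs with a1 a2 a3 a2 a3 a4 a3 a4 <;>
    simp only [dOf] at *
  · -- both before
    intro heq
    simp only [Option.some.injEq, Prod.mk.injEq] at heq
    omega
  · simp
  · -- before / after
    exact cross s t t' r r' σ σ' h (by simp [dOf]; omega) (by simp [dOf]; omega)
  · simp
  · -- both at root
    intro _; omega
  · simp
  · -- after / before
    exact (cross s t' t r' r σ' σ (by omega) (by simp [dOf]; omega) (by simp [dOf]; omega)).symm
  · simp
  · intro heq
    simp only [Option.some.injEq, Prod.mk.injEq] at heq
    omega

theorem scaffold_rounds_are_matchings {m n : ℕ} (s : Fin n → Fin m) :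
    ∀ R ∈ scaffold s, R.Pairwise (NoShare (V := PV m n)) := by
  intro R hR
  simp only [scaffold, List.mem_ofFn, Set.mem_range] at hR
  obtain ⟨τ, rfl⟩ := hR
  rw [List.pairwise_flatten]
  constructor
  · intro l hl
    rw [List.mem_ofFn] at hl
    obtain ⟨t, rfl⟩ := hl
    rw [List.pairwise_ofFn]
    intro r r' hlt
    have hne : (t, r) ≠ (t, r') := by
      intro hc; exact absurd (congrArg Prod.snd hc) (Fin.ne_of_lt hlt)
    exact ⟨key s hne τ.val τ.val (Or.inl rfl),
      key s hne τ.val (τ.val + 1) (Or.inr (Or.inl rfl)),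
      key s hne (τ.val + 1) τ.val (Or.inr (Or.inr rfl)),
      key s hne (τ.val + 1) (τ.val + 1) (Or.inl rfl)⟩
  · rw [List.pairwise_ofFn]
    intro t t' hlt x hx y hy
    rw [List.mem_ofFn] at hx hy
    obtain ⟨r, rfl⟩ := hx
    obtain ⟨r', rfl⟩ := hy
    have hne : (t, r) ≠ (t', r') := by
      intro hc; exact absurd (congrArg Prod.fst hc) (Fin.ne_of_lt hlt)
    exact ⟨key s hne τ.val τ.val (Or.inl rfl),
      key s hne τ.val (τ.val + 1) (Or.inr (Or.inl rfl)),
      key s hne (τ.val + 1) τ.val (Or.inr (Or.inr rfl)),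
      key s hne (τ.val + 1) (τ.val + 1) (Or.inl rfl)⟩


end ParallelTS
end

section
/- Call a swap sequence minimal if no pair of tokens swaps with each other more than once. Let G be a graph, let v be a vertex of degree 1, and suppose the token initially at v has target vertex v (a happy leaf token). Then in every minimal 1-straying swap sequence solving the instance, this token never moves. -/
namespace Straying

/-- Apply a sequence of swaps to a placement (each token is named by its initial
vertex; the placement sends each token to its current vertex). -/
def applySeq {V : Type*} [DecidableEq V] (σ : List (V × V)) (p : Equiv.Perm V) :
    Equiv.Perm V :=
  σ.foldl (fun q e => q.trans (Equiv.swap e.1 e.2)) p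

/-- The position of the token named `u` after the first `τ` swaps of `σ`. -/
def posAt {V : Type*} [DecidableEq V] (σ : List (V × V)) (u : V) (τ : ℕ) : V :=
  applySeq (σ.take τ) 1 u

/-- The unordered pair of tokens exchanged by the `i`-th swap of `σ`. -/
def swappedPair {V : Type*} [DecidableEq V] (σ : List (V × V)) (i : Fin σ.length) :
    Sym2 V :=
  s((applySeq (σ.take i) 1).symm (σ.get i).1, (applySeq (σ.take i) 1).symm (σ.get i).2)

/-- A swap sequence is minimal if no pair of tokens swaps with each other more than
once. -/
def MinimalSeq {V : Type*} [DecidableEq V] (σ : List (V × V)) : Prop :=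
  ∀ i j : Fin σ.length, i < j → swappedPair σ i ≠ swappedPair σ j

/-- A swap sequence is `ℓ`-straying (with respect to the system `P` of paths, `P u`
being the path of the token named `u` from its initial vertex `u` to its target
vertex `π u`): at every intermediate configuration, every token is within distance
`ℓ` of the last vertex of its path that it has reached so far. -/
def IsStraying {V : Type*} [DecidableEq V] (G : SimpleGraph V) (π : Equiv.Perm V)
    (σ : List (V × V)) (P : ∀ u : V, G.Walk u (π u)) (ℓ : ℕ) : Prop :=
  ∀ τ ≤ σ.length, ∀ u : V, ∃ i ≤ (P u).length,
    (∃ τ' ≤ τ, posAt σ u τ' = (P u).getVert i) ∧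
    (∀ j ≤ (P u).length, (∃ τ' ≤ τ, posAt σ u τ' = (P u).getVert j) → j ≤ i) ∧
    G.dist (posAt σ u τ) ((P u).getVert i) ≤ ℓ

end Straying

/-!
Since the token starting on the leaf `v` has target `v`, its path is trivial, so `1`-straying
keeps it within distance `1` of `v`. If it ever moves, it swaps with the token `t` on the unique
neighbour `w` of `v`. From then on it is trapped on `w`: leaving `w` other than back to `v` puts it
at distance `2` from `v`, and going back to `v` swaps it with `t` a second time, which minimality
forbids. So it ends on `w ≠ v`, contradicting that the sequence solves the instance.
-/

namespace Straying

section Graph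

variable {V : Type*} {G : SimpleGraph V}

lemma length_eq_zero_of_isPath_of_eq {u w : V} {p : G.Walk u w} (hp : p.IsPath) (h : u = w) :
    p.length = 0 := by
  subst h
  exact SimpleGraph.Walk.length_eq_zero_iff.mpr (SimpleGraph.Walk.isPath_iff_nil.mp hp)

lemma one_lt_dist_of_adj_of_leaf {v w x : V} (hvw : G.Adj v w) (hleaf : ∀ y, G.Adj v y → y = w)
    (hwx : G.Adj w x) (hxv : x ≠ v) : 1 < G.dist x v :=
  (hwx.symm.reachable.trans hvw.symm.reachable).one_lt_dist_of_ne_of_not_adj hxv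
    fun hxv' => hwx.ne (hleaf x hxv'.symm).symm

variable [DecidableEq V]

lemma sym2_eq_mk_swap_apply {a b x : V} (h : x = a ∨ x = b) :
    s(a, b) = s(x, Equiv.swap a b x) := by
  rcases h with rfl | rfl <;> simp [Sym2.eq_swap]

lemma adj_swap_apply {a b x : V} (hab : G.Adj a b) (h : x = a ∨ x = b) :
    G.Adj x (Equiv.swap a b x) := by
  rw [← SimpleGraph.mem_edgeSet, ← sym2_eq_mk_swap_apply h]
  exact hab

end Graph

section Swaps

variable {V : Type*} [DecidableEq V]

lemma posAt_succ (σ : List (V × V)) (u : V) {τ : ℕ} (h : τ < σ.length) :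
    posAt σ u (τ + 1) = Equiv.swap σ[τ].1 σ[τ].2 (posAt σ u τ) := by
  rw [posAt, posAt, applySeq, applySeq, List.take_add_one, List.getElem?_eq_getElem h,
    Option.toList_some, List.foldl_append]
  rfl

lemma posAt_length (σ : List (V × V)) (u : V) : posAt σ u σ.length = applySeq σ 1 u := by
  simp [posAt]

lemma exists_posAt_eq (σ : List (V × V)) (τ : ℕ) (x : V) : ∃ t, posAt σ t τ = x :=
  (applySeq (σ.take τ) 1).surjective x

lemma swappedPair_eq {σ : List (V × V)} (i : Fin σ.length) {u u' : V}
    (h : s(posAt σ u i, posAt σ u' i) = s(σ[i].1, σ[i].2)) : swappedPair σ i = s(u, u') := by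
  change Sym2.map (applySeq (σ.take i) 1).symm s(σ[i].1, σ[i].2) = _
  rw [← h, Sym2.map_mk]
  simp [posAt]

lemma IsStraying.dist_posAt_le {G : SimpleGraph V} {π : Equiv.Perm V} {σ : List (V × V)}
    {P : ∀ u : V, G.Walk u (π u)} {ℓ : ℕ} (h : IsStraying G π σ P ℓ) {u : V}
    (hu : (P u).length = 0) {τ : ℕ} (hτ : τ ≤ σ.length) : G.dist (posAt σ u τ) u ≤ ℓ := by
  obtain ⟨i, hi, -, -, hdist⟩ := h τ hτ u
  obtain rfl : i = 0 := by omega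
  simpa using hdist

section Leaf

variable {G : SimpleGraph V} {σ : List (V × V)} {v w u t : V}

lemma posAt_succ_of_trapped (hvw : G.Adj v w) (hleaf : ∀ y, G.Adj v y → y = w)
    (hedges : ∀ e ∈ σ, G.Adj e.1 e.2) (hmin : MinimalSeq σ) (k : Fin σ.length) {τ : ℕ}
    (hkτ : k < τ) (hτ : τ < σ.length) (hpair : swappedPair σ k = s(t, u))
    (hu : posAt σ u τ = w) (ht : posAt σ t τ = v) (hnear : G.dist (posAt σ u (τ + 1)) v ≤ 1) :
    posAt σ u (τ + 1) = w ∧ posAt σ t (τ + 1) = v := by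
  have hadj : G.Adj σ[τ].1 σ[τ].2 := hedges _ (List.getElem_mem hτ)
  by_cases hv : v = σ[τ].1 ∨ v = σ[τ].2
  · refine (hmin k ⟨τ, hτ⟩ hkτ (hpair.trans (swappedPair_eq _ ?_).symm)).elim
    rw [ht, hu, ← hleaf _ (adj_swap_apply hadj hv)]
    exact (sym2_eq_mk_swap_apply hv).symm
  have hfix : Equiv.swap σ[τ].1 σ[τ].2 v = v :=
    Equiv.swap_apply_of_ne_of_ne (not_or.mp hv).1 (not_or.mp hv).2
  by_cases hw : w = σ[τ].1 ∨ w = σ[τ].2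
  · have hx : Equiv.swap σ[τ].1 σ[τ].2 w ≠ v := fun h =>
      hvw.ne (Equiv.injective _ (h.trans hfix.symm)).symm
    have := one_lt_dist_of_adj_of_leaf hvw hleaf (adj_swap_apply hadj hw) hx
    rw [posAt_succ σ u hτ, hu] at hnear
    omega
  rw [posAt_succ σ u hτ, posAt_succ σ t hτ, hu, ht, hfix,
    Equiv.swap_apply_of_ne_of_ne (not_or.mp hw).1 (not_or.mp hw).2]
  exact ⟨rfl, rfl⟩

lemma posAt_of_trapped (hvw : G.Adj v w) (hleaf : ∀ y, G.Adj v y → y = w)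
    (hedges : ∀ e ∈ σ, G.Adj e.1 e.2) (hmin : MinimalSeq σ)
    (hnear : ∀ τ ≤ σ.length, G.dist (posAt σ u τ) v ≤ 1) (k : Fin σ.length) {τ₀ : ℕ}
    (hkτ₀ : k < τ₀) (hpair : swappedPair σ k = s(t, u)) (hu : posAt σ u τ₀ = w)
    (ht : posAt σ t τ₀ = v) {τ : ℕ} (hτ₀τ : τ₀ ≤ τ) (hτ : τ ≤ σ.length) :
    posAt σ u τ = w ∧ posAt σ t τ = v := by
  induction τ, hτ₀τ using Nat.le_induction with
  | base => exact ⟨hu, ht⟩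
  | succ τ hτ₀τ ih =>
    obtain ⟨huτ, htτ⟩ := ih (by omega)
    exact posAt_succ_of_trapped hvw hleaf hedges hmin k (by omega) hτ hpair huτ htτ (hnear _ hτ)

lemma posAt_succ_of_leaf (hvw : G.Adj v w) (hleaf : ∀ y, G.Adj v y → y = w)
    (hedges : ∀ e ∈ σ, G.Adj e.1 e.2) (hmin : MinimalSeq σ)
    (hnear : ∀ τ ≤ σ.length, G.dist (posAt σ u τ) v ≤ 1) (hend : posAt σ u σ.length = v)
    {τ : ℕ} (hτ : τ < σ.length) (hu : posAt σ u τ = v) : posAt σ u (τ + 1) = v := by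
  by_cases hv : v = σ[τ].1 ∨ v = σ[τ].2
  · obtain ⟨t, ht⟩ := exists_posAt_eq σ τ (Equiv.swap σ[τ].1 σ[τ].2 v)
    have hw : Equiv.swap σ[τ].1 σ[τ].2 v = w :=
      hleaf _ (adj_swap_apply (hedges _ (List.getElem_mem hτ)) hv)
    have hpair : swappedPair σ ⟨τ, hτ⟩ = s(t, u) := by
      apply swappedPair_eq
      rw [ht, hu, Sym2.eq_swap]
      exact (sym2_eq_mk_swap_apply hv).symm
    have htrap := posAt_of_trapped hvw hleaf hedges hmin hnear ⟨τ, hτ⟩ (Nat.lt_succ_self τ) hpair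
      (by rw [posAt_succ σ u hτ, hu, hw]) (by rw [posAt_succ σ t hτ, ht, Equiv.swap_apply_self])
      hτ le_rfl
    exact absurd (hend.symm.trans htrap.1) hvw.ne
  rw [posAt_succ σ u hτ, hu, Equiv.swap_apply_of_ne_of_ne (not_or.mp hv).1 (not_or.mp hv).2]

end Leaf

end Swaps

theorem happy_leaf_token_never_moves {V : Type*} [DecidableEq V] [Fintype V]
    (G : SimpleGraph V) [DecidableRel G.Adj]
    (π : Equiv.Perm V) (v : V) (hdeg : G.degree v = 1) (hv : π v = v)
    (σ : List (V × V)) (hedges : ∀ e ∈ σ, G.Adj e.1 e.2)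
    (hsol : applySeq σ 1 = π)
    (hmin : MinimalSeq σ)
    (P : ∀ u : V, G.Walk u (π u)) (hP : ∀ u, (P u).IsPath)
    (hstray : IsStraying G π σ P 1) :
    ∀ τ ≤ σ.length, posAt σ v τ = v := by
  obtain ⟨w, hvw, hleaf⟩ := SimpleGraph.degree_eq_one_iff_existsUnique_adj.mp hdeg
  have hnear : ∀ τ ≤ σ.length, G.dist (posAt σ v τ) v ≤ 1 := fun τ hτ =>
    hstray.dist_posAt_le (length_eq_zero_of_isPath_of_eq (hP v) hv.symm) hτ
  have hend : posAt σ v σ.length = v := by rw [posAt_length, hsol, hv]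
  intro τ hτ
  induction τ with
  | zero => rfl
  | succ τ ih => exact posAt_succ_of_leaf hvw hleaf hedges hmin hnear hend hτ (ih (by omega))

end Straying
end
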